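/- Let R be a commutative strongly ℤ-graded ring with grading 𝒜, let k ∈ ℤ, and let M be a module over the subring R_{≤0}. Then the natural map Ω_M : M ⊗[𝒜 0] 𝒜 k → M ⊗[R_{≤0}] R_{≤k}, x ⊗ y ↦ x ⊗ y (induced by the inclusion 𝒜 k ⊆ R_{≤k} and restriction of scalars along 𝒜 0 ⊆ R_{≤0}), is bijective. -/
import Mathlib


open TensorProduct

set_option maxHeartbeats 1000000
set_option synthInstance.maxHeartbeats 400000

/-- A ℤ-graded ring is *strongly graded* if `𝒜 i * 𝒜 j = 𝒜 (i + j)` for all `i j`. -/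
def IsStronglyGraded {R : Type*} [Ring R] (𝒜 : ℤ → Submodule ℤ R) : Prop :=
  ∀ i j : ℤ, 𝒜 i * 𝒜 j = 𝒜 (i + j)

variable {R : Type*} [CommRing R] (𝒜 : ℤ → Submodule ℤ R) [GradedRing 𝒜]

/-- `R_{≤k}`, the sum of the homogeneous components of degree at most `k`. -/
def Rle (k : ℤ) : Submodule ℤ R := ⨆ n ≤ k, 𝒜 n

theorem Rle_mul_Rle (a b : ℤ) : Rle 𝒜 a * Rle 𝒜 b ≤ Rle 𝒜 (a + b) := by
  rw [Rle, Rle, Submodule.iSup_mul]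
  refine iSup_le fun n => ?_
  rw [Submodule.iSup_mul]
  refine iSup_le fun hn => ?_
  rw [Submodule.mul_iSup]
  refine iSup_le fun m => ?_
  rw [Submodule.mul_iSup]
  refine iSup_le fun hm => ?_
  refine le_trans (Submodule.mul_le.2 fun x hx y hy => SetLike.mul_mem_graded hx hy) ?_
  exact le_iSup₂_of_le (n + m) (add_le_add hn hm) le_rfl

theorem grade_mem_Rle {k : ℤ} {x : R} (hx : x ∈ 𝒜 k) : x ∈ Rle 𝒜 k :=
  Submodule.mem_iSup_of_mem k (Submodule.mem_iSup_of_mem le_rfl hx)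

/-- The subring `R_{≤0}` of `R`. -/
def RleSubring : Subring R where
  carrier := Rle 𝒜 0
  zero_mem' := zero_mem _
  add_mem' := fun h1 h2 => add_mem h1 h2
  neg_mem' := fun h => neg_mem h
  one_mem' := grade_mem_Rle 𝒜 (SetLike.one_mem_graded 𝒜)
  mul_mem' := fun h1 h2 => by
    simpa using Rle_mul_Rle 𝒜 0 0 (Submodule.mul_mem_mul h1 h2)

/-- The homogeneous component `𝒜 n` is a module over the subring `𝒜 0`,
with the action given by multiplication in `R`. -/
instance gradeLeftModule (n : ℤ) : Module (𝒜 0) (𝒜 n) where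
  smul a x := ⟨(a : R) * x, by simpa using SetLike.mul_mem_graded a.2 x.2⟩
  one_smul x := Subtype.ext (one_mul _)
  mul_smul a b x := Subtype.ext (mul_assoc _ _ _)
  smul_zero a := Subtype.ext (mul_zero _)
  smul_add a x y := Subtype.ext (mul_add _ _ _)
  add_smul a b x := Subtype.ext (add_mul _ _ _)
  zero_smul x := Subtype.ext (zero_mul _)

/-- `R_{≤k}` is a module over the subring `R_{≤0}`, the action being
multiplication in `R`. -/
instance RleModule (k : ℤ) : Module (RleSubring 𝒜) (Rle 𝒜 k) where
  smul s x := ⟨(s : R) * x, by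
    simpa using Rle_mul_Rle 𝒜 0 k (Submodule.mul_mem_mul s.2 x.2)⟩
  one_smul x := Subtype.ext (one_mul _)
  mul_smul a b x := Subtype.ext (mul_assoc _ _ _)
  smul_zero a := Subtype.ext (mul_zero _)
  smul_add a x y := Subtype.ext (mul_add _ _ _)
  add_smul a b x := Subtype.ext (add_mul _ _ _)
  zero_smul x := Subtype.ext (zero_mul _)

/-- The inclusion of the subring `𝒜 0` into the subring `R_{≤0}`. -/
def incl0le : (𝒜 0) →+* RleSubring 𝒜 where
  toFun a := ⟨(a : R), grade_mem_Rle 𝒜 a.2⟩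
  map_one' := rfl
  map_mul' _ _ := rfl
  map_zero' := rfl
  map_add' _ _ := rfl

/-- Every module over `R_{≤0}` is a module over `𝒜 0` by restriction of
scalars along the inclusion `𝒜 0 → R_{≤0}`. -/
instance restrictRleModule (M : Type*) [AddCommMonoid M] [Module (RleSubring 𝒜) M] :
    Module (𝒜 0) M :=
  Module.compHom M (incl0le 𝒜)


lemma exists_fin_rep (h : IsStronglyGraded 𝒜) (k : ℤ) :
    ∃ (n : ℕ) (v : Fin n → 𝒜 k) (u : Fin n → 𝒜 (-k)),
      ∑ i, (v i : R) * (u i : R) = 1 := by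
  have h1 : (1 : R) ∈ 𝒜 k * 𝒜 (-k) := by
    rw [h k (-k), show k + -k = 0 by omega]
    exact SetLike.one_mem_graded 𝒜
  refine Submodule.mul_induction_on h1
    (fun m hm w hw => ⟨1, fun _ => ⟨m, hm⟩, fun _ => ⟨w, hw⟩, by simp⟩) ?_
  rintro x y ⟨n1, v1, u1, hx⟩ ⟨n2, v2, u2, hy⟩
  refine ⟨n1 + n2, Fin.append v1 v2, Fin.append u1 u2, ?_⟩
  rw [Fin.sum_univ_add]
  simp [Fin.append_left, Fin.append_right, hx, hy]

lemma mul_u_mem_Rle0 {k : ℤ} (r : Rle 𝒜 k) (u : 𝒜 (-k)) :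
    (r : R) * (u : R) ∈ RleSubring 𝒜 := by
  have := Rle_mul_Rle 𝒜 k (-k) (Submodule.mul_mem_mul r.2 (grade_mem_Rle 𝒜 u.2))
  rw [show k + -k = 0 by omega] at this
  exact this

/-- The element `r * u` of the subring `R_{≤0}`, for `r ∈ R_{≤k}` and `u ∈ 𝒜 (-k)`. -/
def sEl {k : ℤ} (r : Rle 𝒜 k) (u : 𝒜 (-k)) : RleSubring 𝒜 :=
  ⟨(r : R) * (u : R), mul_u_mem_Rle0 𝒜 r u⟩

lemma sEl_add {k : ℤ} (r s : Rle 𝒜 k) (u : 𝒜 (-k)) :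
    sEl 𝒜 (r + s) u = sEl 𝒜 r u + sEl 𝒜 s u :=
  Subtype.ext (add_mul _ _ _)

lemma sEl_smul {k : ℤ} (s : RleSubring 𝒜) (r : Rle 𝒜 k) (u : 𝒜 (-k)) :
    sEl 𝒜 (s • r) u = sEl 𝒜 r u * s :=
  Subtype.ext (by show ((s : R) * r) * u = ((r : R) * u) * s; ring)

/-- For a commutative strongly ℤ-graded ring and `M` an `R_{≤0}`-module, the
natural `𝒜 0`-linear map `M ⊗[𝒜 0] 𝒜 k → M ⊗[R_{≤0}] R_{≤k}`, `x ⊗ y ↦ x ⊗ y`,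
is bijective. -/
theorem tensor_grade_to_tensor_Rle_bijective (h : IsStronglyGraded 𝒜) (k : ℤ)
    (M : Type*) [AddCommGroup M] [Module (RleSubring 𝒜) M]
    (g : (M ⊗[𝒜 0] 𝒜 k) →ₗ[𝒜 0] (M ⊗[RleSubring 𝒜] Rle 𝒜 k))
    (hg : ∀ (x : M) (y : 𝒜 k),
      g (x ⊗ₜ y) = x ⊗ₜ (⟨(y : R), grade_mem_Rle 𝒜 y.2⟩ : Rle 𝒜 k)) :
    Function.Bijective g := by
  classical
  obtain ⟨n, v, u, hsum⟩ := exists_fin_rep 𝒜 h k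
  have memA0 : ∀ (y : 𝒜 k) (i : Fin n), (y : R) * (u i : R) ∈ 𝒜 0 := fun y i => by
    have := SetLike.mul_mem_graded y.2 (u i).2
    rwa [show k + -k = 0 by omega] at this
  -- the balanced bi-additive map giving the inverse
  set F : M → Rle 𝒜 k → M ⊗[𝒜 0] 𝒜 k := fun x r =>
    ∑ i, (sEl 𝒜 r (u i) • x) ⊗ₜ[𝒜 0] v i with hF
  have Fadd_r : ∀ (x : M) (r s : Rle 𝒜 k), F x (r + s) = F x r + F x s := fun x r s => by
    rw [hF, ← Finset.sum_add_distrib]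
    exact Finset.sum_congr rfl fun i _ => by
      rw [sEl_add, add_smul, TensorProduct.add_tmul]
  have Fadd_x : ∀ (x y : M) (r : Rle 𝒜 k), F (x + y) r = F x r + F y r := fun x y r => by
    rw [hF, ← Finset.sum_add_distrib]
    exact Finset.sum_congr rfl fun i _ => by rw [smul_add, TensorProduct.add_tmul]
  set Fhom : M →+ (Rle 𝒜 k →+ M ⊗[𝒜 0] 𝒜 k) :=
    AddMonoidHom.mk' (fun x => AddMonoidHom.mk' (F x) (Fadd_r x))
      (fun x y => AddMonoidHom.ext fun r => Fadd_x x y r) with hFhom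
  have hbal : ∀ (s : RleSubring 𝒜) (x : M) (r : Rle 𝒜 k),
      Fhom (s • x) r = Fhom x (s • r) := fun s x r => by
    show F (s • x) r = F x (s • r)
    rw [hF]
    exact Finset.sum_congr rfl fun i _ => by
      rw [sEl_smul, mul_smul]
  set ψ : (M ⊗[RleSubring 𝒜] Rle 𝒜 k) →+ (M ⊗[𝒜 0] 𝒜 k) :=
    TensorProduct.liftAddHom Fhom hbal with hψ
  have hleft : ∀ z, ψ (g z) = z := by
    intro z
    induction z using TensorProduct.induction_on with
    | zero => simp
    | add a b ha hb => rw [map_add, map_add, ha, hb]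
    | tmul x y =>
      rw [hg, hψ, TensorProduct.liftAddHom_tmul]
      show F x ⟨(y : R), grade_mem_Rle 𝒜 y.2⟩ = x ⊗ₜ[𝒜 0] y
      simp only [hF]
      have key : ∀ i : Fin n,
          (sEl 𝒜 (⟨(y : R), grade_mem_Rle 𝒜 y.2⟩ : Rle 𝒜 k) (u i) • x) ⊗ₜ[𝒜 0] v i
            = x ⊗ₜ[𝒜 0] ((⟨(y : R) * (u i : R), memA0 y i⟩ : 𝒜 0) • v i) := fun i => by
        rw [← TensorProduct.smul_tmul]
        rfl
      rw [Finset.sum_congr rfl fun i _ => key i, ← TensorProduct.tmul_sum]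
      congr 1
      apply Subtype.ext
      rw [AddSubmonoidClass.coe_finset_sum]
      have : ∀ i : Fin n,
          (((⟨(y : R) * (u i : R), memA0 y i⟩ : 𝒜 0) • v i : 𝒜 k) : R)
            = (y : R) * ((v i : R) * (u i : R)) := fun i => by
        show ((y : R) * (u i : R)) * (v i : R) = _
        ring
      rw [Finset.sum_congr rfl fun i _ => this i, ← Finset.mul_sum, hsum, mul_one]
  have hright : ∀ z, g (ψ z) = z := by
    intro z
    induction z using TensorProduct.induction_on with
    | zero => simp
    | add a b ha hb => rw [map_add, map_add, ha, hb]
    | tmul x r =>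
      rw [hψ, TensorProduct.liftAddHom_tmul]
      show g (F x r) = x ⊗ₜ[RleSubring 𝒜] r
      simp only [hF]
      rw [map_sum]
      have key : ∀ i : Fin n,
          g ((sEl 𝒜 r (u i) • x) ⊗ₜ[𝒜 0] v i)
            = x ⊗ₜ[RleSubring 𝒜] (sEl 𝒜 r (u i) • (⟨(v i : R), grade_mem_Rle 𝒜 (v i).2⟩ : Rle 𝒜 k)) := fun i => by
        rw [hg, TensorProduct.smul_tmul]
      rw [Finset.sum_congr rfl fun i _ => key i, ← TensorProduct.tmul_sum]
      congr 1
      apply Subtype.ext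
      rw [AddSubmonoidClass.coe_finset_sum]
      have : ∀ i : Fin n,
          (((sEl 𝒜 r (u i) • (⟨(v i : R), grade_mem_Rle 𝒜 (v i).2⟩ : Rle 𝒜 k)) : Rle 𝒜 k) : R)
            = (r : R) * ((v i : R) * (u i : R)) := fun i => by
        show ((r : R) * (u i : R)) * (v i : R) = _
        ring
      rw [Finset.sum_congr rfl fun i _ => this i, ← Finset.mul_sum, hsum, mul_one]
  exact Function.bijective_iff_has_inverse.mpr ⟨ψ, hleft, hright⟩
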